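/- arXiv:2311.00381 — 3 statements merged into one kernel-verified Lean document; each statement's English description precedes it below -/
import Mathlib

section
/- For any λ > 0, the sum Σ_{k=0}^∞ (1/(1+λ))^{k²} is bounded above by (1+λ)·log(1+√λ)/λ + 1/√λ. Consequently, λ·Σ_{k=0}^∞ (1/(1+λ))^{k²} ≤ (1+λ)·log(1+√λ) + √λ for all λ > 0. -/
/-!
Put `s = √λ` and `x = 1 / (1 + s²)`, so that the sum is `1 + ∑ₖ x^((k+1)²)`.
By Bernoulli, `x^(n²) ≤ 1 / (1 + (n s)²)`, and these terms telescope against `arctan (n s) / s`,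
so the tail is at most `π / (2 s)`; this is good for small `s`. For `s ≥ 1/4` the estimate
`(k+1)² ≥ 3k + 1` bounds the tail by the geometric series `x / (1 - x³)`. Both bounds are at most
`(s² - s + 4) / (s (s + 2))`, which is what the right-hand side minus one becomes after
`log (1 + s) ≥ 2 s / (s + 2)`.
-/

open Real

theorem div_one_add_sq_le_arctan_sub_arctan {a b : ℝ} (ha : 0 ≤ a) (hab : a ≤ b) :
    (b - a) / (1 + b ^ 2) ≤ arctan b - arctan a := by
  rw [div_eq_inv_mul]
  refine (convex_Icc a b).mul_sub_le_image_sub_of_le_deriv continuous_arctan.continuousOn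
    differentiable_arctan.differentiableOn (fun t ht => ?_) a (Set.left_mem_Icc.2 hab) b
    (Set.right_mem_Icc.2 hab) hab
  rw [interior_Icc] at ht
  simp only [Real.deriv_arctan, one_div]
  gcongr <;> linarith [ht.1, ht.2]

theorem sum_range_one_div_one_add_sq_le {s : ℝ} (hs : 0 < s) (n : ℕ) :
    ∑ k ∈ Finset.range n, 1 / (1 + ((k + 1) * s) ^ 2) ≤ π / 2 / s := by
  calc ∑ k ∈ Finset.range n, 1 / (1 + ((k + 1) * s) ^ 2)
      ≤ ∑ k ∈ Finset.range n, (arctan ((k + 1 : ℕ) * s) - arctan (k * s)) / s := by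
        refine Finset.sum_le_sum fun k _ => ?_
        have h := div_one_add_sq_le_arctan_sub_arctan (by positivity : 0 ≤ (k : ℝ) * s)
          (by nlinarith : (k : ℝ) * s ≤ (k + 1) * s)
        rw [add_mul, one_mul, add_sub_cancel_left] at h
        push_cast
        rwa [add_mul, one_mul, le_div_iff₀ hs, div_mul_eq_mul_div, one_mul]
    _ = arctan (n * s) / s := by
        rw [← Finset.sum_div, Finset.sum_range_sub (fun k : ℕ => arctan (k * s))]
        simp
    _ ≤ π / 2 / s := by gcongr; exact (arctan_lt_pi_div_two _).le

theorem one_div_one_add_pow_le {l : ℝ} (hl : 0 ≤ l) (n : ℕ) :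
    (1 / (1 + l)) ^ n ≤ 1 / (1 + n * l) := by
  rw [div_pow, one_pow]
  exact one_div_le_one_div_of_le (by positivity) (one_add_mul_le_pow (by linarith) n)

theorem tsum_one_div_one_add_sq_pow_succ_sq_le {s : ℝ} (hs : 0 < s) :
    ∑' k : ℕ, (1 / (1 + s ^ 2)) ^ ((k + 1) ^ 2) ≤ π / 2 / s := by
  refine Real.tsum_le_of_sum_range_le (fun _ => by positivity) fun n =>
    (Finset.sum_le_sum fun k _ => ?_).trans (sum_range_one_div_one_add_sq_le hs n)
  refine (one_div_one_add_pow_le (sq_nonneg s) ((k + 1) ^ 2)).trans_eq ?_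
  push_cast
  ring

theorem summable_pow_sq {x : ℝ} (hx0 : 0 ≤ x) (hx1 : x < 1) :
    Summable fun k : ℕ => x ^ (k ^ 2) :=
  (summable_geometric_of_lt_one hx0 hx1).of_nonneg_of_le (fun _ => by positivity)
    fun k => pow_le_pow_of_le_one hx0 hx1.le (Nat.le_self_pow two_ne_zero k)

theorem tsum_pow_succ_sq_le {x : ℝ} (hx0 : 0 ≤ x) (hx1 : x < 1) :
    ∑' k : ℕ, x ^ ((k + 1) ^ 2) ≤ x / (1 - x ^ 3) := by
  have hx3 : x ^ 3 < 1 := pow_lt_one₀ hx0 hx1 (by norm_num)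
  have hle : ∀ k : ℕ, x ^ ((k + 1) ^ 2) ≤ x * (x ^ 3) ^ k := fun k => by
    rw [← pow_mul, ← pow_succ']
    exact pow_le_pow_of_le_one hx0 hx1.le (by nlinarith [Nat.le_mul_self k])
  have hgeom := (summable_geometric_of_lt_one (by positivity) hx3).mul_left x
  calc ∑' k : ℕ, x ^ ((k + 1) ^ 2) ≤ ∑' k : ℕ, x * (x ^ 3) ^ k :=
        Summable.tsum_le_tsum hle (hgeom.of_nonneg_of_le (fun k => by positivity) hle) hgeom
    _ = x / (1 - x ^ 3) := by
        rw [tsum_mul_left, tsum_geometric_of_lt_one (by positivity) hx3, div_eq_mul_inv]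

theorem pi_div_two_div_le {s : ℝ} (hs0 : 0 < s) (hs : s ≤ 1 / 4) :
    π / 2 / s ≤ (s ^ 2 - s + 4) / (s * (s + 2)) := by
  have hπ := pi_lt_d2
  rw [div_div, div_le_div_iff₀ (by positivity) (by positivity)]
  nlinarith [mul_pos hs0 hs0]

theorem one_div_one_add_sq_div_le {s : ℝ} (hs : 1 / 4 ≤ s) :
    1 / (1 + s ^ 2) / (1 - (1 / (1 + s ^ 2)) ^ 3) ≤ (s ^ 2 - s + 4) / (s * (s + 2)) := by
  have hs0 : 0 < s := by linarith
  have hpoly : (1 + s ^ 2) ^ 2 * (s + 2) ≤ s * (s ^ 2 - s + 4) * (s ^ 4 + 3 * s ^ 2 + 3) := by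
    nlinarith [sq_nonneg (s - 1), sq_nonneg (s ^ 2 - 1), sq_nonneg (s ^ 2 - s), mul_pos hs0 hs0,
      pow_pos hs0 3]
  have hx : 1 / (1 + s ^ 2) / (1 - (1 / (1 + s ^ 2)) ^ 3)
      = (1 + s ^ 2) ^ 2 / (s ^ 2 * (s ^ 4 + 3 * s ^ 2 + 3)) := by
    have : (1 + s ^ 2) ^ 3 - 1 ≠ 0 := (sub_pos.2 (one_lt_pow₀ (by nlinarith) three_ne_zero)).ne'
    rw [div_pow, one_pow, one_sub_div (by positivity)]
    field_simp
    ring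
  rw [hx, div_le_div_iff₀ (by positivity) (by positivity)]
  nlinarith [mul_le_mul_of_nonneg_left hpoly hs0.le]

theorem tsum_one_div_one_add_sq_pow_sq_le {s : ℝ} (hs : 0 < s) :
    ∑' k : ℕ, (1 / (1 + s ^ 2)) ^ (k ^ 2) ≤ 1 + (s ^ 2 - s + 4) / (s * (s + 2)) := by
  have hx0 : 0 ≤ 1 / (1 + s ^ 2) := by positivity
  have hx1 : 1 / (1 + s ^ 2) < 1 := by rw [div_lt_one (by positivity)]; nlinarith
  rw [(summable_pow_sq hx0 hx1).tsum_eq_zero_add]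
  simp only [zero_pow two_ne_zero, pow_zero, add_le_add_iff_left]
  rcases le_total s (1 / 4) with hs4 | hs4
  · exact (tsum_one_div_one_add_sq_pow_succ_sq_le hs).trans (pi_div_two_div_le hs hs4)
  · exact (tsum_pow_succ_sq_le hx0 hx1).trans (one_div_one_add_sq_div_le hs4)

theorem one_add_div_le_log {s : ℝ} (hs : 0 < s) :
    1 + (s ^ 2 - s + 4) / (s * (s + 2)) ≤ (1 + s ^ 2) * log (1 + s) / s ^ 2 + 1 / s := by
  have hlog := le_log_one_add_of_nonneg hs.le
  calc 1 + (s ^ 2 - s + 4) / (s * (s + 2)) = (1 + s ^ 2) * (2 * s / (s + 2)) / s ^ 2 + 1 / s := by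
        field_simp
        ring
    _ ≤ (1 + s ^ 2) * log (1 + s) / s ^ 2 + 1 / s := by gcongr

/-- For any λ > 0, Σ_{k=0}^∞ (1/(1+λ))^{k²} ≤ (1+λ)·log(1+√λ)/λ + 1/√λ, and consequently
λ·Σ_{k=0}^∞ (1/(1+λ))^{k²} ≤ (1+λ)·log(1+√λ) + √λ. -/
theorem stmt_0 (l : ℝ) (hl : 0 < l) :
    (∑' k : ℕ, (1 / (1 + l)) ^ (k ^ 2))
        ≤ (1 + l) * Real.log (1 + Real.sqrt l) / l + 1 / Real.sqrt l ∧
    l * ∑' k : ℕ, (1 / (1 + l)) ^ (k ^ 2)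
        ≤ (1 + l) * Real.log (1 + Real.sqrt l) + Real.sqrt l := by
  obtain ⟨s, hs, rfl⟩ : ∃ s, 0 < s ∧ s ^ 2 = l := ⟨√l, sqrt_pos.2 hl, sq_sqrt hl.le⟩
  rw [sqrt_sq hs.le]
  have h := (tsum_one_div_one_add_sq_pow_sq_le hs).trans (one_add_div_le_log hs)
  refine ⟨h, ?_⟩
  calc s ^ 2 * ∑' k : ℕ, (1 / (1 + s ^ 2)) ^ (k ^ 2)
      ≤ s ^ 2 * ((1 + s ^ 2) * log (1 + s) / s ^ 2 + 1 / s) := by gcongr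
    _ = (1 + s ^ 2) * log (1 + s) + s := by field_simp
end

section
/- For λ ∈ (0,1], λ·Σ_{k=0}^∞ δ(k+1)·(1/(1+λ))^{(k+1)²} ≤ 2·log 2 + 1, where δ: ℕ → [0,1] is any function with values in [0,1]. -/
/-!
Since `δ ≤ 1` and `(k + 1)² ≥ k + 1`, with `r = 1 / (1 + λ) < 1` each term is at most `r ^ (k + 1)`,
so the series is at most the geometric sum `r / (1 - r) = 1 / λ`. Hence the left-hand side is at
most `1 ≤ 2 log 2 + 1`.
-/

theorem tsum_pow_succ_of_lt_one {r : ℝ} (hr0 : 0 ≤ r) (hr1 : r < 1) :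
    ∑' k : ℕ, r ^ (k + 1) = r / (1 - r) := by
  simp only [pow_succ', tsum_mul_left, tsum_geometric_of_lt_one hr0 hr1, div_eq_mul_inv]

theorem tsum_mul_pow_succ_sq_le {r : ℝ} (hr0 : 0 ≤ r) (hr1 : r < 1) {f : ℕ → ℝ}
    (hf : ∀ k, f k ∈ Set.Icc (0 : ℝ) 1) :
    ∑' k : ℕ, f k * r ^ ((k + 1) ^ 2) ≤ r / (1 - r) := by
  have hterm : ∀ k : ℕ, f k * r ^ ((k + 1) ^ 2) ≤ r ^ (k + 1) := fun k =>
    calc f k * r ^ ((k + 1) ^ 2) ≤ r ^ ((k + 1) ^ 2) :=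
          mul_le_of_le_one_left (pow_nonneg hr0 _) (hf k).2
      _ ≤ r ^ (k + 1) := pow_le_pow_of_le_one hr0 hr1.le (Nat.le_self_pow two_ne_zero _)
  have hgeom : Summable fun k : ℕ => r ^ (k + 1) := by
    simpa only [pow_succ'] using (summable_geometric_of_lt_one hr0 hr1).mul_left r
  have hsum : Summable fun k : ℕ => f k * r ^ ((k + 1) ^ 2) :=
    hgeom.of_nonneg_of_le (fun k => mul_nonneg (hf k).1 (pow_nonneg hr0 _)) hterm
  rw [← tsum_pow_succ_of_lt_one hr0 hr1]
  exact hsum.tsum_le_tsum hterm hgeom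

theorem mul_one_div_one_add_div_one_sub {l : ℝ} (hl : 0 < l) :
    l * (1 / (1 + l) / (1 - 1 / (1 + l))) = 1 := by
  have : 1 + l ≠ 0 := by positivity
  rw [one_sub_div this, add_sub_cancel_left]
  field_simp

/-- For λ ∈ (0,1] and any δ : ℕ → [0,1],
λ·Σ_{k=0}^∞ δ(k+1)·(1/(1+λ))^{(k+1)²} ≤ 2·log 2 + 1. -/
theorem stmt_3 (l : ℝ) (hl : l ∈ Set.Ioc (0 : ℝ) 1) (δ : ℕ → ℝ)
    (hδ : ∀ k, δ k ∈ Set.Icc (0 : ℝ) 1) :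
    l * ∑' k : ℕ, δ (k + 1) * (1 / (1 + l)) ^ ((k + 1) ^ 2) ≤ 2 * Real.log 2 + 1 := by
  have hl0 : 0 < l := hl.1
  have hr0 : 0 ≤ 1 / (1 + l) := by positivity
  have hr1 : 1 / (1 + l) < 1 := by rw [div_lt_one (by positivity)]; linarith
  calc l * ∑' k : ℕ, δ (k + 1) * (1 / (1 + l)) ^ ((k + 1) ^ 2)
      ≤ l * (1 / (1 + l) / (1 - 1 / (1 + l))) :=
        mul_le_mul_of_nonneg_left (tsum_mul_pow_succ_sq_le hr0 hr1 fun k => hδ (k + 1)) hl0.le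
    _ = 1 := mul_one_div_one_add_div_one_sub hl0
    _ ≤ 2 * Real.log 2 + 1 := by linarith [Real.log_pos one_lt_two]
end

section
/- Let β ∈ (0,1) and K ∈ (2/((3−β)β), 1/β). Define a = (1−Kβ)/(1−Kβ/2), b = (1−β)/(2−β), and φ₀(μ) = (1−β−(2−β)μ)/(β(K−1)(1−μ)) for μ ∈ (a, b]. Then φ₀ is strictly decreasing on (a, b], φ₀(b) = 0, and φ₀(a) = ((1−β)Kβ − 2 + 2Kβ)/(Kβ²(K−1)) < 1; in particular 0 ≤ φ₀(μ) < 1 for all μ ∈ (a, b]. -/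
/-!
Since `1 - β - (2 - β) μ = (2 - β)(1 - μ) - 1`, we have `φ₀ μ = (2 - β - 1 / (1 - μ)) / (β (K - 1))`,
which is strictly decreasing on `μ < 1` once `K > 1`; so on `(a, b]` it lies between `φ₀ b = 0` and
`φ₀ a`. Writing `t = K β`, the lower bound on `K` says exactly `t (3 - β) > 2`, i.e. `a < b`, and
`φ₀ a < 1` amounts to `(1 - t)(2 - t) > 0`, which holds because `t < 1`.
-/

lemma strictAntiOn_sub_mul_div_mul_one_sub {p q c : ℝ} (hpq : p < q) (hc : 0 < c) :
    StrictAntiOn (fun μ : ℝ => (p - q * μ) / (c * (1 - μ))) (Set.Iio 1) := by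
  intro x hx y hy hxy
  have hx' : 0 < 1 - x := sub_pos.mpr hx
  have hy' : 0 < 1 - y := sub_pos.mpr hy
  show (p - q * y) / (c * (1 - y)) < (p - q * x) / (c * (1 - x))
  rw [div_lt_div_iff₀ (by positivity) (by positivity)]
  nlinarith [mul_pos (mul_pos hc (sub_pos.mpr hpq)) (sub_pos.mpr hxy)]

lemma one_lt_of_two_div_lt {β K : ℝ} (hβ : β ∈ Set.Ioo (0 : ℝ) 1)
    (hK : 2 / ((3 - β) * β) < K) : 1 < K := by
  obtain ⟨hβ0, hβ1⟩ := hβ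
  have hpos : 0 < (3 - β) * β := by nlinarith
  have h2 : 2 < K * ((3 - β) * β) := (div_lt_iff₀ hpos).mp hK
  by_contra! hK1
  nlinarith [mul_le_mul_of_nonneg_right hK1 hpos.le]

lemma div_lt_div_of_two_div_lt {β K : ℝ} (hβ : β ∈ Set.Ioo (0 : ℝ) 1) (hKβ : K * β < 1)
    (hK : 2 / ((3 - β) * β) < K) : (1 - K * β) / (1 - K * β / 2) < (1 - β) / (2 - β) := by
  obtain ⟨hβ0, hβ1⟩ := hβ
  have h2 : 2 < K * ((3 - β) * β) := (div_lt_iff₀ (by nlinarith)).mp hK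
  rw [div_lt_div_iff₀ (by linarith) (by linarith)]
  nlinarith

lemma sub_mul_div_mul_one_sub_eq {β K a : ℝ} (hβ : β ≠ 0) (hK0 : K ≠ 0) (hK1 : K ≠ 1)
    (ht : K * β ≠ 2) (ha : a = (1 - K * β) / (1 - K * β / 2)) :
    (1 - β - (2 - β) * a) / (β * (K - 1) * (1 - a)) =
      ((1 - β) * K * β - 2 + 2 * K * β) / (K * β ^ 2 * (K - 1)) := by
  have hK1' : K - 1 ≠ 0 := sub_ne_zero.mpr hK1
  have ha' : a * (2 - K * β) = 2 * (1 - K * β) := by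
    rw [ha, div_mul_eq_mul_div, div_eq_iff (by contrapose! ht; linarith)]; ring
  have h1a : 1 - a ≠ 0 := by
    intro h
    obtain rfl : a = 1 := by linarith
    exact mul_ne_zero hK0 hβ (by linarith)
  rw [div_eq_div_iff (mul_ne_zero (mul_ne_zero hβ hK1') h1a)
    (mul_ne_zero (mul_ne_zero hK0 (pow_ne_zero 2 hβ)) hK1')]
  linear_combination (-(β * (K - 1))) * ha'

lemma div_lt_one_of_mul_lt_one {β K : ℝ} (hβ : 0 < β) (hK : 1 < K) (hKβ : K * β < 1) :
    ((1 - β) * K * β - 2 + 2 * K * β) / (K * β ^ 2 * (K - 1)) < 1 := by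
  rw [div_lt_one (mul_pos (by positivity) (sub_pos.mpr hK))]
  nlinarith [mul_pos (sub_pos.mpr hKβ) (by linarith : (0 : ℝ) < 2 - K * β)]

/-- Properties of the mixed-strategy part of the relaxed equilibrium in the R&D example:
φ₀(μ) = (1−β−(2−β)μ)/(β(K−1)(1−μ)) is strictly decreasing on (a,b], vanishes at b,
takes the stated value < 1 at a, and lies in [0,1) on (a,b]. -/
theorem stmt_15 (β K : ℝ) (hβ : β ∈ Set.Ioo (0 : ℝ) 1)
    (hK : K ∈ Set.Ioo (2 / ((3 - β) * β)) (1 / β)) :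
    let a := (1 - K * β) / (1 - K * β / 2)
    let b := (1 - β) / (2 - β)
    let φ₀ : ℝ → ℝ := fun μ => (1 - β - (2 - β) * μ) / (β * (K - 1) * (1 - μ))
    StrictAntiOn φ₀ (Set.Ioc a b) ∧ φ₀ b = 0 ∧
    φ₀ a = ((1 - β) * K * β - 2 + 2 * K * β) / (K * β ^ 2 * (K - 1)) ∧
    ((1 - β) * K * β - 2 + 2 * K * β) / (K * β ^ 2 * (K - 1)) < 1 ∧
    ∀ μ ∈ Set.Ioc a b, 0 ≤ φ₀ μ ∧ φ₀ μ < 1 := by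
  intro a b φ₀
  have hK1 : 1 < K := one_lt_of_two_div_lt hβ hK.1
  have hKβ : K * β < 1 := (lt_div_iff₀ hβ.1).mp hK.2
  have hab : a < b := div_lt_div_of_two_div_lt hβ hKβ hK.1
  have hb1 : b < 1 := (div_lt_one (by linarith [hβ.2])).mpr (by linarith)
  have hsub : Set.Ioc a b ⊆ Set.Iio 1 := fun μ hμ => hμ.2.trans_lt hb1
  have hanti : StrictAntiOn φ₀ (Set.Iio 1) :=
    strictAntiOn_sub_mul_div_mul_one_sub (by linarith) (mul_pos hβ.1 (sub_pos.mpr hK1))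
  have hφb : φ₀ b = 0 := by
    simp only [φ₀, b]
    rw [mul_div_cancel₀ _ (by linarith [hβ.2]), sub_self, zero_div]
  have hφa : φ₀ a = ((1 - β) * K * β - 2 + 2 * K * β) / (K * β ^ 2 * (K - 1)) :=
    sub_mul_div_mul_one_sub_eq hβ.1.ne' (zero_lt_one.trans hK1).ne' hK1.ne' (by linarith) rfl
  have hlt := div_lt_one_of_mul_lt_one hβ.1 hK1 hKβ
  refine ⟨hanti.mono hsub, hφb, hφa, hlt, fun μ hμ => ⟨?_, ?_⟩⟩
  · exact hφb ▸ hanti.antitoneOn (hsub hμ) (hsub ⟨hab, le_rfl⟩) hμ.2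
  · exact (hanti (hab.trans hb1) (hsub hμ) hμ.1).trans (hφa ▸ hlt)
end
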